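/- arXiv:2309.02370 — 4 statements merged into one kernel-verified Lean document; each statement's English description precedes it below -/
import Mathlib

section
/- Let m ≥ 3, let A be an (m−1)×m integer matrix, let A′ be the bordered matrix of A, and let A″ be the bordered matrix of A′. Then d(A″) = −2·(d(A′),0) − (d(A),0,0) + d(A)_m·(0,…,0,1) in ℤ^{m+2}, where d(A)_m denotes the last component of d(A). -/
/-!
Expanding a maximal minor of a bordered matrix `border A` along its last row `(0, …, 0, 1, -2)`
gives the one-step recurrence
`d(border A) = -2 (d(A), 0) - (d(Ā), 0, 0) - d(A)_last · e_last`,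
where `Ā` is `A` without its last row and column: `Ā` comes from the minor through the `1`,
which is then expanded along the new column `(0, …, 0, 1)ᵀ`. Since the corresponding truncation
of `border A` is `A` itself, the recurrence for `border A` is the theorem.
-/

/-- The degeneration vector of an `r × (r+1)` integer matrix `A`:
its `j`-th entry is `(-1)^j` times the determinant of the square matrix
obtained from `A` by deleting the `j`-th column (0-indexed). -/
def degVec {r : ℕ} (A : Matrix (Fin r) (Fin (r + 1)) ℤ) : Fin (r + 1) → ℤ :=
  fun j => (-1) ^ (j : ℕ) * (A.submatrix id j.succAbove).det

/-- The bordered matrix of an `r × (r+1)` integer matrix `A`: `A` with the row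
`(0, …, 0, 1, -2)` adjoined at the bottom and the column `(0, …, 0, 1, -2)ᵀ`
adjoined at the right. -/
def border {r : ℕ} (A : Matrix (Fin r) (Fin (r + 1)) ℤ) :
    Matrix (Fin (r + 1)) (Fin (r + 2)) ℤ :=
  Matrix.of fun i j =>
    if hi : (i : ℕ) < r then
      if hj : (j : ℕ) < r + 1 then A ⟨i, hi⟩ ⟨j, hj⟩
      else if (i : ℕ) = r - 1 then 1 else 0
    else
      if (j : ℕ) = r then 1 else if (j : ℕ) = r + 1 then -2 else 0

open Matrix Fin

namespace Matrix

variable {R : Type*} [CommRing R] {n : ℕ}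

theorem det_eq_of_last_row_castSucc_eq_zero (M : Matrix (Fin (n + 1)) (Fin (n + 1)) R)
    (h : ∀ c : Fin n, M (last n) c.castSucc = 0) :
    M.det = M (last n) (last n) * (M.submatrix castSucc castSucc).det := by
  rw [det_succ_row M (last n), sum_univ_castSucc]
  simp [h, succAbove_last, ← two_mul]

theorem det_eq_of_last_col_castSucc_eq_zero (M : Matrix (Fin (n + 1)) (Fin (n + 1)) R)
    (h : ∀ c : Fin n, M c.castSucc (last n) = 0) :
    M.det = M (last n) (last n) * (M.submatrix castSucc castSucc).det := by
  rw [← det_transpose, det_eq_of_last_row_castSucc_eq_zero Mᵀ h, ← transpose_submatrix,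
    det_transpose, transpose_apply]

theorem det_eq_of_last_row_castSucc_castSucc_eq_zero
    (M : Matrix (Fin (n + 2)) (Fin (n + 2)) R)
    (h : ∀ c : Fin n, M (last (n + 1)) c.castSucc.castSucc = 0) :
    M.det = M (last (n + 1)) (last (n + 1)) * (M.submatrix castSucc castSucc).det
      - M (last (n + 1)) (last n).castSucc
        * (M.submatrix castSucc (last n).castSucc.succAbove).det := by
  rw [det_succ_row M (last (n + 1)), sum_univ_castSucc, sum_univ_castSucc]
  have hodd : (-1 : R) ^ (n + 1 + n) = -1 := Odd.neg_one_pow ⟨n, by ring⟩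
  simp [h, succAbove_last, ← two_mul, hodd]
  ring

end Matrix

section Border

variable {r : ℕ}

theorem border_castSucc_castSucc (A : Matrix (Fin r) (Fin (r + 1)) ℤ) (i : Fin r)
    (x : Fin (r + 1)) : border A i.castSucc x.castSucc = A i x := by
  simp [border, Nat.le_of_lt_succ x.isLt]

theorem border_submatrix_castSucc (A : Matrix (Fin r) (Fin (r + 1)) ℤ) :
    (border A).submatrix castSucc castSucc = A := by
  ext i x
  exact border_castSucc_castSucc A i x

theorem border_last_castSucc_castSucc (A : Matrix (Fin r) (Fin (r + 1)) ℤ) (x : Fin r) :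
    border A (last r) x.castSucc.castSucc = 0 := by
  simp [border, x.isLt.ne, (Nat.lt_succ_of_lt x.isLt).ne]

theorem border_last_castSucc_last (A : Matrix (Fin r) (Fin (r + 1)) ℤ) :
    border A (last r) (last r).castSucc = 1 := by
  simp [border]

theorem border_last_last (A : Matrix (Fin r) (Fin (r + 1)) ℤ) :
    border A (last r) (last (r + 1)) = -2 := by
  simp [border]

theorem border_castSucc_last (A : Matrix (Fin (r + 1)) (Fin (r + 2)) ℤ) (i : Fin (r + 1)) :
    border A i.castSucc (last (r + 2)) = if i = last r then 1 else 0 := by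
  simp [border, Fin.ext_iff, Nat.le_of_lt_succ i.isLt]

theorem degVec_border_last (A : Matrix (Fin r) (Fin (r + 1)) ℤ) :
    degVec (border A) (last (r + 1)) = -degVec A (last r) := by
  have hminor : ((border A).submatrix id (last (r + 1)).succAbove).det
      = (A.submatrix id (last r).succAbove).det := by
    rw [det_eq_of_last_row_castSucc_eq_zero _
      (by simp [succAbove_last, border_last_castSucc_castSucc])]
    simp only [submatrix_apply, id_eq, succAbove_last, border_last_castSucc_last, one_mul,
      submatrix_submatrix]
    congr 1
    ext i x
    exact border_castSucc_castSucc A i x.castSucc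
  rw [degVec, degVec, hminor, val_last, val_last, pow_succ]
  ring

theorem degVec_border_castSucc_last (A : Matrix (Fin r) (Fin (r + 1)) ℤ) :
    degVec (border A) (last r).castSucc = -2 * degVec A (last r) := by
  have hminor : ((border A).submatrix id (last r).castSucc.succAbove).det
      = -2 * (A.submatrix id (last r).succAbove).det := by
    rw [det_eq_of_last_row_castSucc_eq_zero _
      (by simp [castSucc_succAbove_castSucc, succAbove_last, border_last_castSucc_castSucc])]
    simp only [submatrix_apply, id_eq, succAbove_castSucc_self, succ_last, border_last_last,
      submatrix_submatrix]
    congr 2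
    ext i x
    simp [castSucc_succAbove_castSucc, succAbove_last, border_castSucc_castSucc]
  simp [degVec, hminor]
  ring

theorem degVec_border_castSucc_castSucc (A : Matrix (Fin (r + 1)) (Fin (r + 2)) ℤ)
    (j : Fin (r + 1)) :
    degVec (border A) j.castSucc.castSucc
      = -2 * degVec A j.castSucc - degVec (A.submatrix castSucc castSucc) j := by
  set N := (border A).submatrix id j.castSucc.castSucc.succAbove
  have hlast : j.castSucc.castSucc.succAbove (last (r + 1)) = last (r + 2) := by
    rw [succAbove_castSucc_of_le _ _ (le_last _), succ_last]
  have hminor_last : (N.submatrix castSucc castSucc).det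
      = (A.submatrix id j.castSucc.succAbove).det := by
    congr 1
    ext i x
    simp [N, castSucc_succAbove_castSucc, border_castSucc_castSucc]
  have hminor_one : (N.submatrix castSucc (last r).castSucc.succAbove).det
      = ((A.submatrix castSucc castSucc).submatrix id j.succAbove).det := by
    rw [det_eq_of_last_col_castSucc_eq_zero _ (fun c => by
      simp [N, hlast, border_castSucc_last, (castSucc_lt_last c).ne])]
    simp only [submatrix_apply, id_eq, N, succAbove_castSucc_self, succ_last, hlast,
      border_castSucc_last, if_true, one_mul]
    congr 1
    ext i x
    simp [castSucc_succAbove_castSucc, succAbove_last, border_castSucc_castSucc]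
  have hN : N.det = -2 * (A.submatrix id j.castSucc.succAbove).det
      - ((A.submatrix castSucc castSucc).submatrix id j.succAbove).det := by
    rw [det_eq_of_last_row_castSucc_castSucc_eq_zero N (fun c => by
      simp [N, castSucc_succAbove_castSucc, border_last_castSucc_castSucc]),
      hminor_last, hminor_one]
    simp [N, hlast, border_last_last, castSucc_succAbove_castSucc,
      succAbove_castSucc_of_le _ _ (le_last _), border_last_castSucc_last]
  rw [degVec, degVec, degVec, hN, val_castSucc, val_castSucc]
  ring

theorem degVec_border (A : Matrix (Fin (r + 1)) (Fin (r + 2)) ℤ) :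
    degVec (border A) = (-2 : ℤ) • snoc (degVec A) 0
      - snoc (snoc (degVec (A.submatrix castSucc castSucc)) 0) 0
      - degVec A (last (r + 1)) • Pi.single (last (r + 2)) 1 := by
  funext j
  induction j using lastCases with
  | last => simp [degVec_border_last]
  | cast j =>
    induction j using lastCases with
    | last => simp [degVec_border_castSucc_last, (castSucc_lt_last _).ne]
    | cast j => simp [degVec_border_castSucc_castSucc, (castSucc_lt_last _).ne]

end Border

/-- Here `m = k + 3 ≥ 3`, `A` is an `(m-1) × m` integer matrix,
`A' = border A` and `A'' = border A'`.  Then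
`d(A'') = -2·(d(A'),0) - (d(A),0,0) + d(A)_m·(0,…,0,1)` in `ℤ^{m+2}`. -/
theorem stmt1 (k : ℕ) (A : Matrix (Fin (k + 2)) (Fin (k + 3)) ℤ) :
    degVec (border (border A)) =
      (-2 : ℤ) • Fin.snoc (degVec (border A)) 0
        - Fin.snoc (Fin.snoc (degVec A) 0) 0
        + degVec A (Fin.last (k + 2)) • Pi.single (Fin.last (k + 4)) 1 := by
  rw [degVec_border (border A), border_submatrix_castSucc, degVec_border_last]
  simp only [neg_smul, sub_neg_eq_add]
end

section
/- Define vectors d_n ∈ ℤ^{(n+34)/2} for even n ≥ 6 by: d_6 = −(13,7,7,1,6,8,6,12,6,12,21,6,13,1,8,1,1,1,4,2); d_8 = (17,9,9,1,8,10,8,16,8,16,27,8,17,1,10,1,1,1,6,4,2); and, for every even n ≥ 6, d_{n+4} = −2·(d_{n+2},0) − (d_n,0,0) + (−1)^{(n+4)/2}·2·(0,…,0,1) in ℤ^{(n+42)/2}. Then for every even n ≥ 6, d_n = (−1)^{n/2}·c₂(n). -/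
/-- For even `n = 2t+6 ≥ 6`, the vector `c₂(n) ∈ ℤ^{(n+34)/2}`, namely
`(2n+1, n+1, n+1, 1, n, n+2, n, 2n, n, 2n, 3n+3, n, 2n+1, 1, n+2, 1, 1, 1, n-2, n-4, …, 4, 2)`. -/
def cJ2 (t : ℕ) : Fin (t + 20) → ℤ := fun j =>
  let n : ℤ := 2 * t + 6
  if h : (j : ℕ) < 18 then
    ![2 * n + 1, n + 1, n + 1, 1, n, n + 2, n, 2 * n, n, 2 * n,
      3 * n + 3, n, 2 * n + 1, 1, n + 2, 1, 1, 1] ⟨j, h⟩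
  else n - 2 * ((j : ℕ) - 17)

/-!
Writing `s t = (-1)^(t+3)`, the signs in the recursion are exactly those for which
`s t • cJ2 t` satisfies it if and only if `cJ2` satisfies the sign-free recursion
`c(t+2) = 2 (c(t+1),0) - (c(t),0,0) + 2 e_last`. Every coordinate of `cJ2 t` is an affine function
of `t`, so it satisfies `x(t+2) = 2 x(t+1) - x t`; and the tail formula `n - 2(j-17)` vanishes
at the first index past the end, so padding with zero agrees with the formula, except for the
second padded zero, where the formula gives `-2`. This accounts for the correction `2 e_last`.
-/

lemma Fin.snoc_smul_zero {M α : Type*} [Zero α] [SMulZeroClass M α] {n : ℕ} (c : M)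
    (f : Fin n → α) :
    Fin.snoc (α := fun _ => α) (c • f) 0 = c • Fin.snoc (α := fun _ => α) f 0 := by
  ext j
  induction j using Fin.lastCases <;> simp

def cJ2Coord (t j : ℕ) : ℤ :=
  let n : ℤ := 2 * t + 6
  if h : j < 18 then
    ![2 * n + 1, n + 1, n + 1, 1, n, n + 2, n, 2 * n, n, 2 * n,
      3 * n + 3, n, 2 * n + 1, 1, n + 2, 1, 1, 1] ⟨j, h⟩
  else n - 2 * ((j : ℤ) - 17)

lemma cJ2_eq_cJ2Coord (t : ℕ) : cJ2 t = fun j : Fin (t + 20) => cJ2Coord t j := by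
  ext
  rfl

lemma cJ2Coord_add_two (t j : ℕ) :
    cJ2Coord (t + 2) j = 2 * cJ2Coord (t + 1) j - cJ2Coord t j := by
  unfold cJ2Coord
  split_ifs with h
  · generalize (⟨j, h⟩ : Fin 18) = k
    fin_cases k <;> simp only [Fin.reduceFinMk, Fin.zero_eta, Fin.mk_one, Matrix.cons_val,
      Matrix.cons_val_zero, Matrix.cons_val_one] <;> push_cast <;> ring
  · push_cast
    ring

lemma cJ2Coord_self_add_twenty (t : ℕ) : cJ2Coord t (t + 20) = 0 := by
  simp only [cJ2Coord, dif_neg (show ¬ t + 20 < 18 by omega)]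
  omega

lemma cJ2Coord_self_add_twentyOne (t : ℕ) : cJ2Coord t (t + 21) = -2 := by
  simp only [cJ2Coord, dif_neg (show ¬ t + 21 < 18 by omega)]
  omega

lemma snoc_cJ2_zero (t : ℕ) :
    (Fin.snoc (cJ2 t) 0 : Fin (t + 21) → ℤ) = fun j : Fin (t + 21) => cJ2Coord t j := by
  rw [← cJ2Coord_self_add_twenty t, cJ2_eq_cJ2Coord]
  exact Fin.snoc_init_self (fun j : Fin (t + 21) => cJ2Coord t j)

lemma cJ2_add_two (t : ℕ) :
    cJ2 (t + 2) = (2 : ℤ) • Fin.snoc (cJ2 (t + 1)) 0 - Fin.snoc (Fin.snoc (cJ2 t) 0) 0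
      + (2 : ℤ) • Pi.single (Fin.last (t + 21)) 1 := by
  rw [snoc_cJ2_zero, snoc_cJ2_zero, cJ2_eq_cJ2Coord]
  ext j
  induction j using Fin.lastCases with
  | last =>
    have hlast : cJ2Coord (t + 1) (t + 21) = 0 := cJ2Coord_self_add_twenty (t + 1)
    simp [cJ2Coord_add_two, hlast, cJ2Coord_self_add_twentyOne]
  | cast i =>
    simpa [Pi.single_apply, Fin.castSucc_ne_last] using cJ2Coord_add_two t i

lemma cJ2_zero :
    cJ2 0 = ![13, 7, 7, 1, 6, 8, 6, 12, 6, 12, 21, 6, 13, 1, 8, 1, 1, 1, 4, 2] := by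
  decide

lemma cJ2_one :
    cJ2 1 = ![17, 9, 9, 1, 8, 10, 8, 16, 8, 16, 27, 8, 17, 1, 10, 1, 1, 1, 6, 4, 2] := by
  decide

/-- Here `n = 2t + 6`, so that `(n+34)/2 = t + 20`, `n/2 = t + 3` and `(n+4)/2 = t + 5`. -/
theorem stmt9 (d : ∀ t : ℕ, Fin (t + 20) → ℤ)
    (h6 : d 0 = -![13, 7, 7, 1, 6, 8, 6, 12, 6, 12, 21, 6, 13, 1, 8, 1, 1, 1, 4, 2])
    (h8 : d 1 = ![17, 9, 9, 1, 8, 10, 8, 16, 8, 16, 27, 8, 17, 1, 10, 1, 1, 1, 6, 4, 2])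
    (hrec : ∀ t : ℕ,
      d (t + 2) = (-2 : ℤ) • Fin.snoc (d (t + 1)) 0
        - Fin.snoc (Fin.snoc (d t) 0) 0
        + ((-1 : ℤ) ^ (t + 5) * 2) • Pi.single (Fin.last (t + 21)) 1) :
    ∀ t : ℕ, d t = ((-1 : ℤ) ^ (t + 3)) • cJ2 t := by
  intro t
  induction t using Nat.twoStepInduction with
  | zero => rw [h6, cJ2_zero]; norm_num
  | one => rw [h8, cJ2_one]; norm_num
  | more t ih₀ ih₁ =>
    rw [hrec, ih₀, ih₁, cJ2_add_two, Fin.snoc_smul_zero, Fin.snoc_smul_zero, Fin.snoc_smul_zero]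
    module
end

section
/- Let n ≥ 5 be odd and set N = (n+25)/2. Let δ ∈ ℤ^N be the vector (1, 2, 1, 1, 1, n−2, 1, 2, n−2, 1, 1, 3, 4, 2, n−3, n−5, …, 4, 2), whose first 14 components are as listed and whose (14+k)-th component equals n+1−2k for 1 ≤ k ≤ (n−3)/2. Let I = (i_1,…,i_N) ∈ {0,1,∞}^N be the tuple (∞, ∞, 0, 0, ∞, 0, 1, ∞, ∞, 1, ∞, 1, ∞, ∞, ∞) followed by (n−5)/2 entries equal to ∞. Define V ∈ ℤ^{2N} by (V_{2ν−1}, V_{2ν}) = δ_ν·ρ_{i_ν}. Let 𝔪 ∈ ℤ^{2N} be zero except 𝔪_{20} = 𝔪_{23} = 𝔪_{28} = −1, and let 𝔩 ∈ ℤ^{2N} have first 28 entries (−1, −1, 1, −1, 0, −1, −1, 0, 0, 0, 1, −1, 0, −1, 1, 0, −1, 0, 0, 2n−7, −1, 1, 2n−7, −1, 0, 0, 1, 2n−6) and all remaining entries zero. Then 𝔪 ∧ V = −1 and 𝔩 ∧ V = 6; in particular, −(𝔩 ∧ V)/(𝔪 ∧ V) = 6. -/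
/-!
Both `𝔪` and `𝔩` vanish beyond the 14th pair, so `𝔪 ∧ V` and `𝔩 ∧ V` are sums over the first
14 pairs, where every entry is explicit and at most linear in `n`. The `n`-dependent
contributions to `𝔩 ∧ V` come from pairs 6, 9, 10 and 14, namely
`-(n-2) - (n-2) - (2n-7) + (4n-10) = 1`, so both pairings are independent of `n`.
-/

/-- Degeneration indices: the formal symbols `0`, `1`, `∞`. -/
inductive DegIdx : Type
  | zero
  | one
  | inf
  deriving DecidableEq

/-- `ρ₀ = (0,-1)`, `ρ₁ = (1,0)`, `ρ_∞ = (-1,1)`. -/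
def rho : DegIdx → ℤ × ℤ
  | DegIdx.zero => (0, -1)
  | DegIdx.one => (1, 0)
  | DegIdx.inf => (-1, 1)

/-- A vector in `ℤ^{2N}` is encoded as `Fin N → ℤ × ℤ`, the `ν`-th pair being the
`(2ν-1)`-th and `(2ν)`-th coordinates.  The pairing
`x ∧ y = ∑_{k=1}^{N} (x_{2k-1}·y_{2k} − x_{2k}·y_{2k-1})`. -/
def wedge {N : ℕ} (x y : Fin N → ℤ × ℤ) : ℤ :=
  ∑ k : Fin N, ((x k).1 * (y k).2 - (x k).2 * (y k).1)

/-- For odd `n = 2t+5 ≥ 5`, the vector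
`δ = (1, 2, 1, 1, 1, n-2, 1, 2, n-2, 1, 1, 3, 4, 2, n-3, n-5, …, 4, 2) ∈ ℤ^{(n+25)/2}`. -/
def delta11 (t : ℕ) : Fin (t + 15) → ℤ := fun j =>
  let n : ℤ := 2 * t + 5
  if h : (j : ℕ) < 14 then
    ![1, 2, 1, 1, 1, n - 2, 1, 2, n - 2, 1, 1, 3, 4, 2] ⟨j, h⟩
  else n - 1 - 2 * ((j : ℕ) - 13)

/-- The meridian vector `𝔪 ∈ ℤ^{2N}`, `N = (n+25)/2`, of the triangulation of `K_n`
(`n = 2t+5`): zero except `𝔪₂₀ = 𝔪₂₃ = 𝔪₂₈ = -1`; in pair form, the 10th pair is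
`(0,-1)`, the 12th pair is `(-1,0)` and the 14th pair is `(0,-1)` (1-indexed). -/
def meridK (t : ℕ) : Fin (t + 15) → ℤ × ℤ := fun ν =>
  if (ν : ℕ) = 9 then (0, -1)
  else if (ν : ℕ) = 11 then (-1, 0)
  else if (ν : ℕ) = 13 then (0, -1)
  else (0, 0)

/-- The longitude vector `𝔩 ∈ ℤ^{2N}` of the triangulation of `K_n` (`n = 2t+5`), whose
first 28 entries are
`(-1,-1,1,-1,0,-1,-1,0,0,0,1,-1,0,-1,1,0,-1,0,0,2n-7,-1,1,2n-7,-1,0,0,1,2n-6)`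
and all remaining entries zero, written in pair form. -/
def longK (t : ℕ) : Fin (t + 15) → ℤ × ℤ := fun ν =>
  let n : ℤ := 2 * t + 5
  if h : (ν : ℕ) < 14 then
    ![(-1, -1), (1, -1), (0, -1), (-1, 0), (0, 0), (1, -1), (0, -1),
      (1, 0), (-1, 0), (0, 2 * n - 7), (-1, 1), (2 * n - 7, -1), (0, 0),
      (1, 2 * n - 6)] ⟨ν, h⟩
  else (0, 0)

/-- The degeneration index list `I₂` for `K_n` (`n = 2t+5`):
`(∞, ∞, 0, 0, ∞, 0, 1, ∞, ∞, 1, ∞, 1, ∞, ∞, ∞)` followed by `(n-5)/2 = t` entries `∞`. -/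
def I2K (t : ℕ) : Fin (t + 15) → DegIdx := fun ν =>
  if h : (ν : ℕ) < 15 then
    ![DegIdx.inf, DegIdx.inf, DegIdx.zero, DegIdx.zero, DegIdx.inf, DegIdx.zero,
      DegIdx.one, DegIdx.inf, DegIdx.inf, DegIdx.one, DegIdx.inf, DegIdx.one,
      DegIdx.inf, DegIdx.inf, DegIdx.inf] ⟨ν, h⟩
  else DegIdx.inf

/-- The vector `V ∈ ℤ^{2N}` with `(V_{2ν-1}, V_{2ν}) = δ_ν · ρ_{i_ν}`, where `I = I₂`. -/
def V11 (t : ℕ) : Fin (t + 15) → ℤ × ℤ := fun ν => delta11 t ν • rho (I2K t ν)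

theorem wedge_eq_wedge_comp_castLE {m N : ℕ} (h : m ≤ N) (x y : Fin N → ℤ × ℤ)
    (hx : ∀ k : Fin N, m ≤ (k : ℕ) → x k = 0) :
    wedge x y = wedge (x ∘ Fin.castLE h) (y ∘ Fin.castLE h) := by
  refine (Fintype.sum_of_injective _ (Fin.castLE_injective h) _ _ (fun k hk => ?_)
    fun _ => rfl).symm
  have hmk : m ≤ k := by
    by_contra! hkm
    exact hk ⟨⟨k, hkm⟩, rfl⟩
  simp [hx k hmk]

theorem meridK_eq_zero (t : ℕ) (k : Fin (t + 15)) (hk : 14 ≤ (k : ℕ)) : meridK t k = 0 := by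
  rw [meridK, if_neg (by omega), if_neg (by omega), if_neg (by omega)]
  rfl

theorem longK_eq_zero (t : ℕ) (k : Fin (t + 15)) (hk : 14 ≤ (k : ℕ)) : longK t k = 0 := by
  rw [longK, dif_neg (by omega)]
  rfl

theorem wedge_meridK_V11 (t : ℕ) : wedge (meridK t) (V11 t) = -1 := by
  rw [wedge_eq_wedge_comp_castLE (by omega : 14 ≤ t + 15) _ _ (meridK_eq_zero t)]
  simp [wedge, Fin.sum_univ_succ, meridK, V11, delta11, I2K, rho]

theorem wedge_longK_V11 (t : ℕ) : wedge (longK t) (V11 t) = 6 := by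
  rw [wedge_eq_wedge_comp_castLE (by omega : 14 ≤ t + 15) _ _ (longK_eq_zero t)]
  simp [wedge, Fin.sum_univ_succ, longK, V11, delta11, I2K, rho]
  ring

/-- For odd `n = 2t+5 ≥ 5`:  `𝔪 ∧ V = -1`, `𝔩 ∧ V = 6`, and
`-(𝔩 ∧ V)/(𝔪 ∧ V) = 6`. -/
theorem stmt11 (t : ℕ) :
    wedge (meridK t) (V11 t) = -1 ∧
    wedge (longK t) (V11 t) = 6 ∧
    ((-(wedge (longK t) (V11 t)) : ℤ) : ℚ) /
      ((wedge (meridK t) (V11 t) : ℤ) : ℚ) = 6 := by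
  refine ⟨wedge_meridK_V11 t, wedge_longK_V11 t, ?_⟩
  rw [wedge_meridK_V11, wedge_longK_V11]
  norm_num
end

section
/- Let n ≥ 6 be even and set N = (n+34)/2. Let δ = c₂(n) ∈ ℤ^N, and let I = (i_1,…,i_N) ∈ {0,1,∞}^N be the tuple (∞, 1, 0, ∞, ∞, 0, 1, 0, 0, 0, 1, 0, ∞, ∞, 1, ∞, 0, 0) followed by (n−2)/2 entries equal to 0. Define V ∈ ℤ^{2N} by (V_{2ν−1}, V_{2ν}) = δ_ν·ρ_{i_ν}. Let 𝔪 ∈ ℤ^{2N} be zero except 𝔪_9 = −1, 𝔪_{31} = 1, 𝔪_{32} = −1, 𝔪_{34} = 1, 𝔪_{35} = 1, and let 𝔩 ∈ ℤ^{2N} have first 36 entries (1, −1, 1, −2, −1, 1, −1, 1, −8, −1, −1, 2, −2, 1, 1, −1, −2, 1, −1, 1, −2, 3, 0, −1, 0, 1, 0, 1, −1, −1, 10, −10, 1, 7, 7, 2) and all remaining entries zero. Then 𝔪 ∧ V = −(n+1) and 𝔩 ∧ V = −(10n + 8); in particular, −(𝔩 ∧ V)/(𝔪 ∧ V) = −(10n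 + 8)/(n + 1). -/
/-- The meridian vector `𝔪 ∈ ℤ^{2N}`, `N = (n+34)/2`, of the triangulation of `J_n`
(`n = 2t+6`): zero except `𝔪₉ = -1`, `𝔪₃₁ = 1`, `𝔪₃₂ = -1`, `𝔪₃₄ = 1`, `𝔪₃₅ = 1`;
in pair form, the 5th pair is `(-1,0)`, the 16th is `(1,-1)`, the 17th is `(0,1)` and
the 18th is `(1,0)` (1-indexed). -/
def meridJ (t : ℕ) : Fin (t + 20) → ℤ × ℤ := fun ν =>
  if (ν : ℕ) = 4 then (-1, 0)
  else if (ν : ℕ) = 15 then (1, -1)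
  else if (ν : ℕ) = 16 then (0, 1)
  else if (ν : ℕ) = 17 then (1, 0)
  else (0, 0)

/-- The longitude vector `𝔩 ∈ ℤ^{2N}` of the triangulation of `J_n`, whose first 36
entries are `(1,-1,1,-2,-1,1,-1,1,-8,-1,-1,2,-2,1,1,-1,-2,1,-1,1,-2,3,0,-1,0,1,0,1,-1,-1,
10,-10,1,7,7,2)` and all remaining entries zero, written in pair form. -/
def longJ (t : ℕ) : Fin (t + 20) → ℤ × ℤ := fun ν =>
  if h : (ν : ℕ) < 18 then
    ![(1, -1), (1, -2), (-1, 1), (-1, 1), (-8, -1), (-1, 2), (-2, 1),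
      (1, -1), (-2, 1), (-1, 1), (-2, 3), (0, -1), (0, 1), (0, 1),
      (-1, -1), (10, -10), (1, 7), (7, 2)] ⟨ν, h⟩
  else (0, 0)

/-- The degeneration index list `I₂` for `J_n` (`n = 2t+6`):
`(∞, 1, 0, ∞, ∞, 0, 1, 0, 0, 0, 1, 0, ∞, ∞, 1, ∞, 0, 0)` followed by `(n-2)/2 = t+2`
entries `0`. -/
def I2J (t : ℕ) : Fin (t + 20) → DegIdx := fun ν =>
  if h : (ν : ℕ) < 18 then
    ![DegIdx.inf, DegIdx.one, DegIdx.zero, DegIdx.inf, DegIdx.inf, DegIdx.zero,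
      DegIdx.one, DegIdx.zero, DegIdx.zero, DegIdx.zero, DegIdx.one, DegIdx.zero,
      DegIdx.inf, DegIdx.inf, DegIdx.one, DegIdx.inf, DegIdx.zero, DegIdx.zero] ⟨ν, h⟩
  else DegIdx.zero

/-- The vector `V ∈ ℤ^{2N}` with `(V_{2ν-1}, V_{2ν}) = δ_ν · ρ_{i_ν}`, where `δ = c₂(n)`
and `I = I₂`. -/
def V14 (t : ℕ) : Fin (t + 20) → ℤ × ℤ := fun ν => cJ2 t ν • rho (I2J t ν)

/-! Both `𝔪` and `𝔩` vanish beyond the 18th pair, so only the first 18 entries of `V` contribute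
to the wedge products; these entries are explicit affine functions of `n`, and the wedges reduce to
a finite computation. -/

lemma wedge_eq_sum_castLE {N M : ℕ} (hMN : M ≤ N) (x y : Fin N → ℤ × ℤ)
    (hx : ∀ k : Fin N, M ≤ (k : ℕ) → x k = 0) :
    wedge x y = ∑ j : Fin M,
      ((x (Fin.castLE hMN j)).1 * (y (Fin.castLE hMN j)).2
        - (x (Fin.castLE hMN j)).2 * (y (Fin.castLE hMN j)).1) := by
  obtain ⟨d, rfl⟩ := Nat.exists_eq_add_of_le hMN
  have htail : ∀ i : Fin d, x (Fin.natAdd M i) = 0 := fun i => hx _ (by simp)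
  simp only [wedge, Fin.sum_univ_add, htail, Prod.fst_zero, Prod.snd_zero, zero_mul, sub_zero,
    Finset.sum_const_zero, add_zero]
  rfl

lemma meridJ_eq_zero_of_le {t : ℕ} (ν : Fin (t + 20)) (hν : 18 ≤ (ν : ℕ)) : meridJ t ν = 0 := by
  simp only [meridJ]
  rw [if_neg (by omega), if_neg (by omega), if_neg (by omega), if_neg (by omega)]
  rfl

lemma longJ_eq_zero_of_le {t : ℕ} (ν : Fin (t + 20)) (hν : 18 ≤ (ν : ℕ)) : longJ t ν = 0 := by
  simp only [longJ, dif_neg (show ¬(ν : ℕ) < 18 by omega)]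
  rfl

lemma wedge_meridJ_V14 (t : ℕ) : wedge (meridJ t) (V14 t) = -((2 * (t : ℤ) + 6) + 1) := by
  rw [wedge_eq_sum_castLE (by omega) _ _ meridJ_eq_zero_of_le]
  simp [Fin.sum_univ_succ, V14, cJ2, meridJ, I2J, rho]
  ring

lemma wedge_longJ_V14 (t : ℕ) : wedge (longJ t) (V14 t) = -(10 * (2 * (t : ℤ) + 6) + 8) := by
  rw [wedge_eq_sum_castLE (by omega) _ _ longJ_eq_zero_of_le]
  simp [Fin.sum_univ_succ, V14, cJ2, longJ, I2J, rho]
  ring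

/-- For even `n = 2t+6 ≥ 6`:  `𝔪 ∧ V = -(n+1)`, `𝔩 ∧ V = -(10n + 8)`, and
`-(𝔩 ∧ V)/(𝔪 ∧ V) = -(10n + 8)/(n + 1)`. -/
theorem stmt14 (t : ℕ) :
    wedge (meridJ t) (V14 t) = -((2 * (t : ℤ) + 6) + 1) ∧
    wedge (longJ t) (V14 t) = -(10 * (2 * (t : ℤ) + 6) + 8) ∧
    ((-(wedge (longJ t) (V14 t)) : ℤ) : ℚ) / ((wedge (meridJ t) (V14 t) : ℤ) : ℚ) =
      -(10 * (2 * (t : ℚ) + 6) + 8) / ((2 * (t : ℚ) + 6) + 1) := by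
  refine ⟨wedge_meridJ_V14 t, wedge_longJ_V14 t, ?_⟩
  rw [wedge_meridJ_V14, wedge_longJ_V14]
  push_cast
  rw [neg_neg, div_neg, neg_div]
end
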